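/- arXiv:cs/0607095 — 2 statements merged into one kernel-verified Lean document; each statement's English description precedes it below -/
import Mathlib

section
/- For the random coding exponent function ˜E₀(ρ,β,N) = C(ρ,β) − (1/N) ln E[det(I_m + γΘ/(β(1+ρ)))^{-Nρ}] with C(ρ,β) = (1+ρ)(n_T−β) + n_T(1+ρ)ln(β/n_T), one has ˜E₀(ρ,β,N) ≤ ˜E₀(ρ,β,N−1) for every integer N ≥ 2 (the exponent is nonincreasing in the coherence time N). -/
open Matrix MeasureTheory
open scoped ComplexOrder

/-!
Write `X = det(I + cΘ)^(-ρ)`, a positive random variable since `I + cΘ` is positive definite.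
Then `Ẽ₀(N) = C - (1/N) log E[X^N]`, and by Jensen's inequality for the convex map `x ↦ x^(t/s)`
applied to `X^s`, the normalized log-moment `s ↦ (1/s) log E[X^s]` is nondecreasing on `(0, ∞)`.
-/

theorem Matrix.PosSemidef.re_det_one_add_smul_pos {𝕜 n : Type*} [RCLike 𝕜] [Fintype n]
    [DecidableEq n] {A : Matrix n n 𝕜} (hA : A.PosSemidef) {c : ℝ} (hc : 0 ≤ c) :
    0 < RCLike.re (1 + c • A).det :=
  (RCLike.pos_iff.mp (PosDef.one.add_posSemidef (hA.smul hc)).det_pos).1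

theorem MeasureTheory.integral_pos_of_forall_pos {W : Type*} [MeasurableSpace W]
    {μ : Measure W} [NeZero μ] {f : W → ℝ} (hf : ∀ ω, 0 < f ω) (hfi : Integrable f μ) :
    0 < ∫ ω, f ω ∂μ := by
  rw [integral_pos_iff_support_of_nonneg (fun ω => (hf ω).le) hfi,
    Function.support_eq_univ fun ω => (hf ω).ne']
  simpa using NeZero.ne μ

theorem log_integral_rpow_div_le_of_le {W : Type*} [MeasurableSpace W] {μ : Measure W}
    [IsProbabilityMeasure μ] {X : W → ℝ} (hX : ∀ ω, 0 < X ω) {s t : ℝ} (hs : 0 < s)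
    (hst : s ≤ t) (hXs : Integrable (fun ω => X ω ^ s) μ)
    (hXt : Integrable (fun ω => X ω ^ t) μ) :
    Real.log (∫ ω, X ω ^ s ∂μ) / s ≤ Real.log (∫ ω, X ω ^ t ∂μ) / t := by
  have ht : 0 < t := hs.trans_le hst
  have hIs : 0 < ∫ ω, X ω ^ s ∂μ :=
    integral_pos_of_forall_pos (fun ω => Real.rpow_pos_of_pos (hX ω) s) hXs
  have hpow : ∀ ω, (X ω ^ s) ^ (t / s) = X ω ^ t := fun ω => by
    rw [← Real.rpow_mul (hX ω).le, mul_div_cancel₀ t hs.ne']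
  have jensen : (∫ ω, X ω ^ s ∂μ) ^ (t / s) ≤ ∫ ω, X ω ^ t ∂μ := by
    simp only [← hpow]
    refine (convexOn_rpow ((one_le_div hs).mpr hst)).map_integral_le
      (continuousOn_id.rpow_const fun _ _ => Or.inr (div_nonneg ht.le hs.le)) isClosed_Ici
      (.of_forall fun ω => (Real.rpow_pos_of_pos (hX ω) s).le) hXs ?_
    simpa only [Function.comp_def, hpow] using hXt
  have hlog := Real.log_le_log (Real.rpow_pos_of_pos hIs _) jensen
  rw [Real.log_rpow hIs] at hlog
  calc Real.log (∫ ω, X ω ^ s ∂μ) / s = t / s * Real.log (∫ ω, X ω ^ s ∂μ) / t := by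
        field_simp
    _ ≤ Real.log (∫ ω, X ω ^ t ∂μ) / t := by gcongr

theorem stmt_9_general {W : Type*} [MeasureSpace W] (μ : Measure W) [IsProbabilityMeasure μ]
    (m : ℕ) (ρ β nT γ : ℝ) (hρ0 : 0 ≤ ρ)
    (hβ : β ∈ Set.Ioc (0 : ℝ) nT) (hγ : 0 < γ)
    (Θ : W → Matrix (Fin m) (Fin m) ℂ) (hΘ : ∀ ω, (Θ ω).PosSemidef)
    (hint : ∀ N : ℕ, Integrable (fun ω =>
      (((1 : Matrix (Fin m) (Fin m) ℂ)
        + (γ / (β * (1 + ρ))) • Θ ω).det.re) ^ (-((N : ℝ) * ρ))) μ)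
    (E₀ : ℕ → ℝ)
    (hE₀ : ∀ N : ℕ, E₀ N = (1 + ρ) * (nT - β) + nT * (1 + ρ) * Real.log (β / nT)
        - (1 / (N : ℝ)) * Real.log (∫ ω,
            (((1 : Matrix (Fin m) (Fin m) ℂ)
              + (γ / (β * (1 + ρ))) • Θ ω).det.re) ^ (-((N : ℝ) * ρ)) ∂μ)) :
    ∀ N : ℕ, 2 ≤ N → E₀ N ≤ E₀ (N - 1) := by
  intro N hN
  obtain ⟨D, hD_def⟩ : ∃ D : W → ℝ, ∀ ω,
      D ω = ((1 : Matrix (Fin m) (Fin m) ℂ) + (γ / (β * (1 + ρ))) • Θ ω).det.re :=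
    ⟨_, fun _ => rfl⟩
  simp only [← hD_def] at hint hE₀
  have hD : ∀ ω, 0 < D ω := fun ω => hD_def ω ▸
    (hΘ ω).re_det_one_add_smul_pos (div_nonneg hγ.le (mul_nonneg hβ.1.le (by linarith)))
  have hmoment : ∀ (K : ℕ) ω, D ω ^ (-((K : ℝ) * ρ)) = (D ω ^ (-ρ)) ^ (K : ℝ) := fun K ω => by
    rw [← Real.rpow_mul (hD ω).le]; ring_nf
  have hN2 : (2 : ℝ) ≤ N := by exact_mod_cast hN
  have hN1 : ((N - 1 : ℕ) : ℝ) = N - 1 := Nat.cast_pred (by omega)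
  have key := log_integral_rpow_div_le_of_le (μ := μ) (fun ω => Real.rpow_pos_of_pos (hD ω) (-ρ))
    (s := ((N - 1 : ℕ) : ℝ)) (t := N) (by rw [hN1]; linarith) (by rw [hN1]; linarith)
    (by simpa only [hmoment] using hint (N - 1)) (by simpa only [hmoment] using hint N)
  simp only [← hmoment] at key
  rw [hE₀ N, hE₀ (N - 1), one_div_mul_eq_div, one_div_mul_eq_div]
  linarith

/-- Channel-incurable effect: the random coding exponent
`˜E₀(ρ,β,N) = C(ρ,β) − (1/N) ln E[det(I + γΘ/(β(1+ρ)))^{-Nρ}]` is nonincreasing in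
the coherence time `N`. -/
theorem stmt_9 {W : Type*} [MeasureSpace W] (μ : Measure W) [IsProbabilityMeasure μ]
    (m : ℕ) (ρ β nT γ : ℝ) (hρ0 : 0 ≤ ρ) (hρ1 : ρ ≤ 1) (hnT : 0 < nT)
    (hβ : β ∈ Set.Ioc (0 : ℝ) nT) (hγ : 0 < γ)
    (Θ : W → Matrix (Fin m) (Fin m) ℂ) (hΘ : ∀ ω, (Θ ω).PosSemidef)
    (hint : ∀ N : ℕ, Integrable (fun ω =>
      (((1 : Matrix (Fin m) (Fin m) ℂ)
        + (γ / (β * (1 + ρ))) • Θ ω).det.re) ^ (-((N : ℝ) * ρ))) μ)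
    (E₀ : ℕ → ℝ)
    (hE₀ : ∀ N : ℕ, E₀ N = (1 + ρ) * (nT - β) + nT * (1 + ρ) * Real.log (β / nT)
        - (1 / (N : ℝ)) * Real.log (∫ ω,
            (((1 : Matrix (Fin m) (Fin m) ℂ)
              + (γ / (β * (1 + ρ))) • Θ ω).det.re) ^ (-((N : ℝ) * ρ)) ∂μ)) :
    ∀ N : ℕ, 2 ≤ N → E₀ N ≤ E₀ (N - 1) :=
  stmt_9_general μ m ρ β nT γ hρ0 hβ hγ Θ hΘ hint E₀ hE₀
end

section
/- The cutoff rate R₀ = −(1/N_c)·ln E[det(I_m + (γ/(2n_T))Θ)^{-N_c}] is strictly decreasing in N_c whenever the random variable det(I_m + (γ/(2n_T))Θ) is non-degenerate, and R₀ → 0 as N_c → ∞ when det(I + (γ/(2n_T))Θ) has essential infimum 1 (i.e., Θ takes values near 0 with positive probability). -/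
open Matrix MeasureTheory Filter
open scoped ComplexOrder

/-!
All eigenvalues of `I + cΘ` are at least `1`, so `X = det(I + cΘ)⁻¹` takes values in `(0, 1]`
and every moment `a N = E[X ^ N]` lies in `(0, 1]`. Cauchy–Schwarz, in the strict form coming
from `∬ X(x)^k X(y)^k (X(x) - X(y))² > 0` for non-constant `X`, makes `log a` strictly convex;
as `log a 0 = 0`, the chord slopes `log a N / N` strictly increase, i.e. `R₀` strictly
decreases. For the limit, `log a N / N ≤ 0`, while for every `t < 1 = ess sup X` the bound
`a N ≥ t ^ N μ{t ≤ X}` with `μ{t ≤ X} > 0` gives `liminf log a N / N ≥ log t`.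
-/

namespace Matrix

variable {n 𝕜 : Type*} [Fintype n] [DecidableEq n] [RCLike 𝕜] {A : Matrix n n 𝕜}

open scoped Pointwise in
lemma PosSemidef.one_le_eigenvalues_one_add (hA : A.PosSemidef) (hH : (1 + A).IsHermitian)
    (i : n) : 1 ≤ hH.eigenvalues i := by
  have hmem : hH.eigenvalues i ∈ ({1} : Set ℝ) + spectrum ℝ A := by
    rw [spectrum.singleton_add_eq, map_one]
    exact hH.eigenvalues_mem_spectrum_real i
  rw [hA.1.spectrum_real_eq_range_eigenvalues] at hmem
  obtain ⟨_, rfl, _, ⟨j, rfl⟩, hi⟩ := hmem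
  rw [← hi]
  linarith [hA.eigenvalues_nonneg j]

lemma PosSemidef.one_le_det_one_add (hA : A.PosSemidef) : 1 ≤ (1 + A).det := by
  have hH : (1 + A).IsHermitian := isHermitian_one.add hA.1
  rw [hH.det_eq_prod_eigenvalues, ← RCLike.ofReal_prod, ← RCLike.ofReal_one,
    RCLike.ofReal_le_ofReal]
  exact Finset.one_le_prod fun i _ => hA.one_le_eigenvalues_one_add hH i

end Matrix

lemma div_lt_div_succ_of_two_mul_lt_add {L : ℕ → ℝ} (h0 : L 0 = 0)
    (hconv : ∀ k, 2 * L (k + 1) < L k + L (k + 2)) {N : ℕ} (hN : 1 ≤ N) :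
    L N / N < L (N + 1) / (N + 1) := by
  rw [div_lt_div_iff₀ (by positivity) (by positivity)]
  -- The gap `N L(N+1) - (N+1) L N` grows by `(N+1) (L N - 2 L(N+1) + L(N+2)) > 0` at each step.
  induction N, hN using Nat.le_induction with
  | base => norm_num; linarith [hconv 0]
  | succ N hN ih =>
    push_cast at ih ⊢
    nlinarith [hconv N, (by exact_mod_cast hN : (1 : ℝ) ≤ N)]

section Moments

variable {Ω : Type*} [MeasurableSpace Ω] {μ : Measure Ω} {X : Ω → ℝ}

lemma integrable_pow_of_nonneg_of_le_one [IsFiniteMeasure μ] (hX : Measurable X)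
    (hX0 : ∀ ω, 0 ≤ X ω) (hX1 : ∀ ω, X ω ≤ 1) (N : ℕ) :
    Integrable (fun ω => X ω ^ N) μ :=
  .of_bound (hX.pow_const N).aestronglyMeasurable 1 <| ae_of_all _ fun ω => by
    rw [Real.norm_eq_abs, abs_pow, abs_of_nonneg (hX0 ω)]
    exact pow_le_one₀ (hX0 ω) (hX1 ω)

lemma integral_pow_pos [IsFiniteMeasure μ] [NeZero μ] (hX : Measurable X)
    (hX0 : ∀ ω, 0 < X ω) (hX1 : ∀ ω, X ω ≤ 1) (N : ℕ) : 0 < ∫ ω, X ω ^ N ∂μ := by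
  rw [integral_pos_iff_support_of_nonneg (fun ω => pow_nonneg (hX0 ω).le N)
    (integrable_pow_of_nonneg_of_le_one hX (fun ω => (hX0 ω).le) hX1 N)]
  have hsupport : Function.support (fun ω => X ω ^ N) = Set.univ :=
    Set.eq_univ_of_forall fun ω => (pow_pos (hX0 ω) N).ne'
  simp [hsupport, NeZero.ne μ]

lemma integral_pow_le_one [IsProbabilityMeasure μ] (hX : Measurable X)
    (hX0 : ∀ ω, 0 ≤ X ω) (hX1 : ∀ ω, X ω ≤ 1) (N : ℕ) : ∫ ω, X ω ^ N ∂μ ≤ 1 := by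
  simpa using integral_mono (integrable_pow_of_nonneg_of_le_one hX hX0 hX1 N)
    (integrable_const (μ := μ) (1 : ℝ)) fun ω => pow_le_one₀ (hX0 ω) (hX1 ω)

lemma integral_prod_pow_mul_sq_sub [IsFiniteMeasure μ] (hX : Measurable X)
    (hX0 : ∀ ω, 0 ≤ X ω) (hX1 : ∀ ω, X ω ≤ 1) (k : ℕ) :
    ∫ p, X p.1 ^ k * X p.2 ^ k * (X p.1 - X p.2) ^ 2 ∂μ.prod μ
      = 2 * ((∫ ω, X ω ^ k ∂μ) * (∫ ω, X ω ^ (k + 2) ∂μ) - (∫ ω, X ω ^ (k + 1) ∂μ) ^ 2) := by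
  have hint (a b : ℕ) : Integrable (fun p : Ω × Ω => X p.1 ^ a * X p.2 ^ b) (μ.prod μ) :=
    (integrable_pow_of_nonneg_of_le_one hX hX0 hX1 a).mul_prod
      (integrable_pow_of_nonneg_of_le_one hX hX0 hX1 b)
  have hprod (a b : ℕ) : ∫ p, X p.1 ^ a * X p.2 ^ b ∂μ.prod μ
      = (∫ ω, X ω ^ a ∂μ) * ∫ ω, X ω ^ b ∂μ :=
    integral_prod_mul (fun ω => X ω ^ a) (fun ω => X ω ^ b)
  have hexpand : (fun p : Ω × Ω => X p.1 ^ k * X p.2 ^ k * (X p.1 - X p.2) ^ 2) = fun p =>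
      X p.1 ^ (k + 2) * X p.2 ^ k + X p.1 ^ k * X p.2 ^ (k + 2)
        - 2 * (X p.1 ^ (k + 1) * X p.2 ^ (k + 1)) := by
    ext p; ring
  have hsum : Integrable (fun p : Ω × Ω =>
      X p.1 ^ (k + 2) * X p.2 ^ k + X p.1 ^ k * X p.2 ^ (k + 2)) (μ.prod μ) :=
    (hint _ _).add (hint _ _)
  rw [hexpand, integral_sub hsum ((hint _ _).const_mul 2),
    integral_add (hint _ _) (hint _ _), integral_const_mul, hprod, hprod, hprod]
  ring

lemma exists_ae_eq_const_of_ae_prod_eq [NeZero μ] [SFinite μ]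
    (h : ∀ᵐ p ∂μ.prod μ, X p.1 = X p.2) : ∃ c, ∀ᵐ ω ∂μ, X ω = c := by
  obtain ⟨x, hx⟩ := (Measure.ae_ae_of_ae_prod h).exists
  exact ⟨X x, hx.mono fun _ hy => hy.symm⟩

lemma sq_integral_pow_succ_lt [IsFiniteMeasure μ] [NeZero μ] (hX : Measurable X)
    (hX0 : ∀ ω, 0 < X ω) (hX1 : ∀ ω, X ω ≤ 1) (hX_const : ¬ ∃ c, ∀ᵐ ω ∂μ, X ω = c) (k : ℕ) :
    (∫ ω, X ω ^ (k + 1) ∂μ) ^ 2 < (∫ ω, X ω ^ k ∂μ) * (∫ ω, X ω ^ (k + 2) ∂μ) := by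
  set g : Ω × Ω → ℝ := fun p => X p.1 ^ k * X p.2 ^ k * (X p.1 - X p.2) ^ 2
  have hX0' : ∀ ω, 0 ≤ X ω := fun ω => (hX0 ω).le
  have hg_nonneg : 0 ≤ g := fun p =>
    mul_nonneg (mul_nonneg (pow_nonneg (hX0' _) k) (pow_nonneg (hX0' _) k)) (sq_nonneg _)
  have hg_int : Integrable g (μ.prod μ) := by
    refine .of_bound (by fun_prop) 1 (ae_of_all _ fun p => ?_)
    have hsq : (X p.1 - X p.2) ^ 2 ≤ 1 := (sq_le_one_iff_abs_le_one _).2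
      (abs_sub_le_of_nonneg_of_le (hX0' _) (hX1 _) (hX0' _) (hX1 _))
    rw [Real.norm_eq_abs, abs_of_nonneg (hg_nonneg p)]
    exact mul_le_one₀ (mul_le_one₀ (pow_le_one₀ (hX0' _) (hX1 _)) (pow_nonneg (hX0' _) k)
      (pow_le_one₀ (hX0' _) (hX1 _))) (sq_nonneg _) hsq
  have hsupport : Function.support g = {p | X p.1 ≠ X p.2} := by
    ext p
    simp [g, sub_eq_zero, (hX0 p.1).ne', (hX0 p.2).ne']
  have hg_pos : 0 < ∫ p, g p ∂μ.prod μ := by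
    rw [integral_pos_iff_support_of_nonneg hg_nonneg hg_int, hsupport, pos_iff_ne_zero]
    intro h
    exact hX_const (exists_ae_eq_const_of_ae_prod_eq (measure_eq_zero_iff_ae_notMem.1 h |>.mono
      fun _ hp => not_not.1 hp))
  have hgap := integral_prod_pow_mul_sq_sub (μ := μ) hX hX0' hX1 k
  linarith

lemma log_integral_pow_div_lt_succ [IsProbabilityMeasure μ] (hX : Measurable X)
    (hX0 : ∀ ω, 0 < X ω) (hX1 : ∀ ω, X ω ≤ 1) (hX_const : ¬ ∃ c, ∀ᵐ ω ∂μ, X ω = c) {N : ℕ}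
    (hN : 1 ≤ N) :
    Real.log (∫ ω, X ω ^ N ∂μ) / N < Real.log (∫ ω, X ω ^ (N + 1) ∂μ) / (N + 1) := by
  refine div_lt_div_succ_of_two_mul_lt_add (L := fun N => Real.log (∫ ω, X ω ^ N ∂μ))
    (by simp) (fun k => ?_) hN
  have hpos := integral_pow_pos (μ := μ) hX hX0 hX1
  have hlog := Real.log_lt_log (pow_pos (hpos (k + 1)) 2)
    (sq_integral_pow_succ_lt hX hX0 hX1 hX_const k)
  rwa [Real.log_pow, Real.log_mul (hpos k).ne' (hpos (k + 2)).ne'] at hlog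

lemma measure_le_ne_zero_of_lt_essSup [NeZero μ] (hX0 : ∀ ω, 0 ≤ X ω) {t : ℝ}
    (ht : t < essSup X μ) : μ {ω | t ≤ X ω} ≠ 0 := by
  intro h
  refine ht.not_ge (essSup_le_of_ae_le t ?_ (isCoboundedUnder_le_of_le _ hX0))
  filter_upwards [measure_eq_zero_iff_ae_notMem.1 h] with ω hω
  exact (not_le.1 hω).le

lemma pow_mul_measureReal_le_integral_pow [IsFiniteMeasure μ] (hX0 : ∀ ω, 0 ≤ X ω) {N : ℕ}
    (hint : Integrable (fun ω => X ω ^ N) μ) {t : ℝ} (ht : 0 ≤ t) :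
    t ^ N * μ.real {ω | t ≤ X ω} ≤ ∫ ω, X ω ^ N ∂μ :=
  calc t ^ N * μ.real {ω | t ≤ X ω}
      ≤ t ^ N * μ.real {ω | t ^ N ≤ X ω ^ N} :=
        mul_le_mul_of_nonneg_left (measureReal_mono fun ω hω => pow_le_pow_left₀ ht hω N)
          (pow_nonneg ht N)
    _ ≤ ∫ ω, X ω ^ N ∂μ :=
        mul_meas_ge_le_integral_of_nonneg (ae_of_all _ fun ω => pow_nonneg (hX0 ω) N) hint _

lemma tendsto_log_integral_pow_div [IsProbabilityMeasure μ] (hX : Measurable X)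
    (hX0 : ∀ ω, 0 < X ω) (hX1 : ∀ ω, X ω ≤ 1) (hess : essSup X μ = 1) :
    Tendsto (fun N : ℕ => Real.log (∫ ω, X ω ^ N ∂μ) / N) atTop (nhds 0) := by
  have hX0' : ∀ ω, 0 ≤ X ω := fun ω => (hX0 ω).le
  refine tendsto_order.2 ⟨fun b hb => ?_, fun b hb => Eventually.of_forall fun N => ?_⟩
  · set t := Real.exp (b / 2)
    have hbt : b < Real.log t := by rw [Real.log_exp]; linarith
    have hp : 0 < μ.real {ω | t ≤ X ω} := ENNReal.toReal_pos
      (measure_le_ne_zero_of_lt_essSup hX0' (hess ▸ Real.exp_lt_one_iff.2 (by linarith)))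
      (measure_ne_top _ _)
    have hlower (N : ℕ) (hN : 1 ≤ N) : Real.log t + Real.log (μ.real {ω | t ≤ X ω}) / N
        ≤ Real.log (∫ ω, X ω ^ N ∂μ) / N := by
      have hN' : (0 : ℝ) < N := by exact_mod_cast hN
      have h := Real.log_le_log (by positivity) (pow_mul_measureReal_le_integral_pow hX0'
        (integrable_pow_of_nonneg_of_le_one hX hX0' hX1 N) (Real.exp_pos _).le)
      rw [Real.log_mul (by positivity) hp.ne', Real.log_pow] at h
      rw [le_div_iff₀ hN', add_mul, div_mul_cancel₀ _ hN'.ne']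
      linarith
    have hlim : Tendsto (fun N : ℕ => Real.log t + Real.log (μ.real {ω | t ≤ X ω}) / N)
        atTop (nhds (Real.log t)) := by
      simpa using (tendsto_const_nhds (x := Real.log t)).add
        (tendsto_const_div_atTop_nhds_zero_nat (Real.log (μ.real {ω | t ≤ X ω})))
    filter_upwards [hlim.eventually (lt_mem_nhds hbt), eventually_ge_atTop 1] with N h1 h2
    exact h1.trans_le (hlower N h2)
  · exact (div_nonpos_of_nonpos_of_nonneg (Real.log_nonpos (integral_pow_pos hX hX0 hX1 N).le
      (integral_pow_le_one hX hX0' hX1 N)) N.cast_nonneg).trans_lt hb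

end Moments

/-- The cutoff rate `R₀(N_c) = −(1/N_c)·ln E[det(I + (γ/(2n_T))Θ)^{-N_c}]` is strictly
decreasing in `N_c` when `det(I + (γ/(2n_T))Θ)` is non-degenerate, and tends to `0`
as `N_c → ∞` when the essential infimum of the determinant is `1` (i.e. the essential
supremum of its reciprocal `X` is `1`). -/
theorem stmt_18 {W : Type*} [MeasureSpace W] (μ : Measure W) [IsProbabilityMeasure μ]
    (m : ℕ) (nT γ : ℝ) (hnT : 0 < nT) (hγ : 0 < γ)
    (Θ : W → Matrix (Fin m) (Fin m) ℂ) (hΘ : ∀ ω, (Θ ω).PosSemidef)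
    (X : W → ℝ)
    (hX : ∀ ω, X ω = ((((1 : Matrix (Fin m) (Fin m) ℂ)
        + (γ / (2 * nT)) • Θ ω).det.re))⁻¹)
    (hXmeas : Measurable X)
    (hnondeg : ¬ ∃ c : ℝ, ∀ᵐ ω ∂μ, X ω = c)
    (hess : essSup X μ = 1)
    (R₀ : ℕ → ℝ)
    (hR₀ : ∀ N : ℕ, R₀ N = -(1 / (N : ℝ)) * Real.log (∫ ω, (X ω) ^ N ∂μ)) :
    (∀ N : ℕ, 1 ≤ N → R₀ (N + 1) < R₀ N) ∧
      Tendsto (fun N : ℕ => R₀ N) atTop (nhds 0) := by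
  have hdet (ω : W) : 1 ≤ ((1 : Matrix (Fin m) (Fin m) ℂ) + (γ / (2 * nT)) • Θ ω).det.re := by
    simpa using (Complex.le_def.1 ((hΘ ω).smul (by positivity)).one_le_det_one_add).1
  have hX0 (ω : W) : 0 < X ω := hX ω ▸ inv_pos.2 (zero_lt_one.trans_le (hdet ω))
  have hX1 (ω : W) : X ω ≤ 1 := hX ω ▸ inv_le_one_of_one_le₀ (hdet ω)
  have hR₀' (N : ℕ) : R₀ N = -(Real.log (∫ ω, X ω ^ N ∂μ) / N) := by rw [hR₀]; ring
  refine ⟨fun N hN => ?_, ?_⟩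
  · rw [hR₀', hR₀', neg_lt_neg_iff]
    push_cast
    exact log_integral_pow_div_lt_succ hXmeas hX0 hX1 hnondeg hN
  · simpa [hR₀'] using (tendsto_log_integral_pow_div hXmeas hX0 hX1 hess).neg
end
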